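/- A morphism (f⁰, f¹) : X → Y of module factorizations is p-null-homotopical (i.e., there exist h⁰ : X⁰ → ᵗ⁻¹(Y¹) and h¹ : X¹ → Y⁰, each factoring through a projective A-module, with f⁰ = h¹d⁰_X + ᵗ⁻¹(d¹_Y)h⁰ and f¹ = d⁰_Y h¹ + ᵗ(h⁰)d¹_X) if and only if (f⁰, f¹) factors through θ⁰(P) ⊕ θ¹(Q) for some projective A-modules P and Q. -/

import Mathlib

/-!
STATEMENT 15: A morphism `(f⁰, f¹) : X → Y` of module factorizations is
p-null-homotopical (there are `h⁰ : X⁰ → ᵗ⁻¹(Y¹)` and `h¹ : X¹ → Y⁰`, each factoring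
through a projective `A`-module, with `f⁰ = h¹ ∘ d⁰_X + ᵗ⁻¹(d¹_Y) ∘ h⁰` and
`f¹ = d⁰_Y ∘ h¹ + ᵗ(h⁰) ∘ d¹_X`) if and only if `(f⁰, f¹)` factors through
`θ⁰(P) ⊕ θ¹(Q)` for some projective `A`-modules `P` and `Q`.
(Here a map into a `σ⁻¹`-twist is encoded as a `σ⁻¹`-semilinear map.)
-/

universe u v

/-- A module factorization `X = (X⁰, X¹; d⁰, d¹)` of `ω` over `A`: `d⁰ : X⁰ → X¹` is
`A`-linear and `d¹ : X¹ → ᵗ(X⁰)` is `A`-linear, i.e. `d¹ : X¹ → X⁰` is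
`σ`-semilinear, with `d¹ ∘ d⁰ = ω_{X⁰}` and `ᵗ(d⁰) ∘ d¹ = ω_{X¹}`. -/
structure MFact (A : Type u) [Ring A] (ω : A) (σ : A ≃+* A) : Type (max u (v + 1)) where
  X0 : ModuleCat.{v} A
  X1 : ModuleCat.{v} A
  d0 : X0 →ₗ[A] X1
  d1 : X1 →ₛₗ[(σ : A →+* A)] X0
  comp01 : ∀ x : X0, d1 (d0 x) = ω • x
  comp10 : ∀ x : X1, d0 (d1 x) = ω • x

variable {A : Type u} [Ring A] {ω : A} {σ : A ≃+* A}

/-- A morphism of module factorizations. -/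
@[ext] structure MFactHom (X Y : MFact.{u, v} A ω σ) where
  f0 : X.X0 →ₗ[A] Y.X0
  f1 : X.X1 →ₗ[A] Y.X1
  comm0 : ∀ x : X.X0, f1 (X.d0 x) = Y.d0 (f0 x)
  comm1 : ∀ x : X.X1, f0 (X.d1 x) = Y.d1 (f1 x)

/-- Composition of morphisms of module factorizations. -/
def MFactHom.comp {X Y Z : MFact.{u, v} A ω σ} (g : MFactHom Y Z) (f : MFactHom X Y) :
    MFactHom X Z where
  f0 := g.f0 ∘ₗ f.f0
  f1 := g.f1 ∘ₗ f.f1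
  comm0 := fun x => by
    simp only [LinearMap.comp_apply, f.comm0 x, g.comm0 (f.f0 x)]
  comm1 := fun x => by
    simp only [LinearMap.comp_apply, f.comm1 x, g.comm1 (f.f1 x)]

variable (ω σ)

/-- The trivial module factorization `θ⁰(M) = (M, M; Id_M, ω_M)`. -/
def theta0 (hσ : ∀ a : A, ω * a = σ a * ω)
    (M : Type v) [AddCommGroup M] [Module A M] : MFact.{u, v} A ω σ where
  X0 := ModuleCat.of A M
  X1 := ModuleCat.of A M
  d0 := LinearMap.id
  d1 :=
    { toFun := fun m => ω • m
      map_add' := fun x y => smul_add ω x y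
      map_smul' := fun a m => by
        simp only [RingHom.coe_coe]
        rw [smul_smul, smul_smul, hσ] }
  comp01 := fun x => rfl
  comp10 := fun x => rfl

/-- The `τ`-twist of a module: a copy of `M`, with the `A`-action `a • m = τ a • m`. -/
@[ext] structure Tw {A : Type u} [Ring A] (τ : A →+* A) (M : Type v) : Type v where
  /-- the element of `M` underlying an element of `Tw τ M` -/
  un : M

/-- The identity map `M → Tw τ M`. -/
def Tw.of {A : Type u} [Ring A] (τ : A →+* A) {M : Type v} (m : M) : Tw τ M := ⟨m⟩

section Tw

variable {A : Type u} [Ring A] (τ : A →+* A) (M : Type v) [AddCommGroup M] [Module A M]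

/-- The canonical bijection `Tw τ M ≃ M`. -/
def Tw.equiv : Tw τ M ≃ M := ⟨Tw.un, Tw.of τ, fun _ => rfl, fun _ => rfl⟩

instance : AddCommGroup (Tw τ M) := (Tw.equiv τ M).addCommGroup

instance : SMul A (Tw τ M) := ⟨fun a m => Tw.of τ (τ a • m.un)⟩

theorem Tw.un_add (x y : Tw τ M) : (x + y).un = x.un + y.un := rfl

theorem Tw.smul_def (a : A) (m : Tw τ M) : a • m = Tw.of τ (τ a • m.un) := rfl

instance : Module A (Tw τ M) :=
  Module.ofMinimalAxioms
    (fun a x y => by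
      ext
      show τ a • (x + y).un = (τ a • x.un) + (τ a • y.un)
      rw [Tw.un_add, smul_add])
    (fun a b x => by
      ext
      show τ (a + b) • x.un = (τ a • x.un) + (τ b • x.un)
      rw [map_add, add_smul])
    (fun a b x => by
      ext
      show τ (a * b) • x.un = τ a • τ b • x.un
      rw [map_mul, mul_smul])
    (fun x => by
      ext
      show τ 1 • x.un = x.un
      rw [map_one, one_smul])

end Tw

/-- The trivial module factorization `θ¹(M) = (ᵗ⁻¹(M), M; ω_{ᵗ⁻¹(M)}, Id_M)`. -/
def theta1 (hσ : ∀ a : A, ω * a = σ a * ω) (hreg : ∀ a : A, a * ω = 0 → a = 0)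
    (M : Type v) [AddCommGroup M] [Module A M] : MFact.{u, v} A ω σ where
  X0 := ModuleCat.of A (Tw (σ.symm : A →+* A) M)
  X1 := ModuleCat.of A M
  d0 :=
    { toFun := fun m => ω • m.un
      map_add' := fun x y => by
        show ω • (x + y).un = ω • x.un + ω • y.un
        rw [Tw.un_add, smul_add]
      map_smul' := fun a m => by
        simp only [RingHom.id_apply]
        show ω • (σ.symm a • m.un) = a • (ω • m.un)
        rw [smul_smul, smul_smul, hσ (σ.symm a), RingEquiv.apply_symm_apply] }
  d1 :=
    { toFun := fun m => Tw.of (σ.symm : A →+* A) m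
      map_add' := fun x y => rfl
      map_smul' := fun a m => by
        apply Tw.ext
        show a • m = σ.symm (σ a) • m
        rw [RingEquiv.symm_apply_apply] }
  comp01 := fun x => by
    have hσω : σ.symm ω = ω := by
      have h2 : (σ ω - ω) * ω = 0 := by rw [sub_mul, ← hσ ω, sub_self]
      have h3 : σ ω = ω := by
        have h4 := hreg _ h2
        rwa [sub_eq_zero] at h4
      rw [← h3, RingEquiv.symm_apply_apply, h3]
    apply Tw.ext
    show ω • x.un = σ.symm ω • x.un
    rw [hσω]
  comp10 := fun x => rfl

variable {ω σ}

/-- The direct sum of two module factorizations. -/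
def MFact.prod (X Y : MFact.{u, v} A ω σ) : MFact.{u, v} A ω σ where
  X0 := ModuleCat.of A (X.X0 × Y.X0)
  X1 := ModuleCat.of A (X.X1 × Y.X1)
  d0 := X.d0.prodMap Y.d0
  d1 :=
    { toFun := fun p => (X.d1 p.1, Y.d1 p.2)
      map_add' := fun p q => by
        show (X.d1 (p.1 + q.1), Y.d1 (p.2 + q.2)) = _
        rw [map_add, map_add]; rfl
      map_smul' := fun a p => by
        show (X.d1 (a • p.1), Y.d1 (a • p.2)) = _
        rw [X.d1.map_smulₛₗ, Y.d1.map_smulₛₗ]; rfl }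
  comp01 := fun p => by
    show (X.d1 (X.d0 p.1), Y.d1 (Y.d0 p.2)) = ω • p
    rw [X.comp01, Y.comp01]; rfl
  comp10 := fun p => by
    show (X.d0 (X.d1 p.1), Y.d0 (Y.d1 p.2)) = ω • p
    rw [X.comp10, Y.comp10]; rfl

/-- An `A`-linear map factors through some projective `A`-module. -/
def FactorsThroughProjective {A : Type u} [Ring A] {M N : ModuleCat.{v} A}
    (h : M →ₗ[A] N) : Prop :=
  ∃ Q : ModuleCat.{v} A, Module.Projective A Q ∧
    ∃ (u : M →ₗ[A] Q) (v : Q →ₗ[A] N), ∀ m, h m = v (u m)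

/-- A `τ`-semilinear map factors through some projective `A`-module (i.e. the
corresponding `A`-linear map into the twist factors through the twist of a
projective module). -/
def FactorsThroughProjectiveSL {A : Type u} [Ring A] (τ : A →+* A)
    {M N : ModuleCat.{v} A} (h : M →ₛₗ[τ] N) : Prop :=
  ∃ Q : ModuleCat.{v} A, Module.Projective A Q ∧
    ∃ (u : M →ₛₗ[τ] Q) (v : Q →ₗ[A] N), ∀ m, h m = v (u m)


/-!
The trivial factorizations are free on their components: a morphism `X → θ⁰(P)` is the same as a
linear map `X¹ → P`, a morphism `θ⁰(P) → Y` the same as a linear map `P → Y⁰`, and likewise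
`X → θ¹(Q)` is a `σ⁻¹`-semilinear map `X⁰ → Q` and `θ¹(Q) → Y` a linear map `Q → Y¹`. Reading a
composite `X → θ⁰(P) ⊕ θ¹(Q) → Y` through these correspondences gives exactly
`(h¹d⁰ + d¹h⁰, d⁰h¹ + h⁰d¹)` with `h¹ : X¹ → P → Y⁰` and `h⁰ : X⁰ → Q → Y¹`, and conversely.
-/

section Twist

variable {τ : A →+* A} {M N : Type v} [AddCommGroup M] [Module A M] [AddCommGroup N] [Module A N]

variable (τ M) in
def Tw.unₛₗ : Tw τ M →ₛₗ[τ] M where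
  toFun := Tw.un
  map_add' _ _ := rfl
  map_smul' _ _ := rfl

def LinearMap.toTw (g : M →ₛₗ[τ] N) : M →ₗ[A] Tw τ N where
  toFun m := Tw.of τ (g m)
  map_add' x y := congrArg (Tw.of τ) (map_add g x y)
  map_smul' a x := congrArg (Tw.of τ) (g.map_smulₛₗ a x)

end Twist

theorem RingEquiv.symm_apply_eq_self_of_mul_eq_apply_mul (hσ : ∀ a : A, ω * a = σ a * ω)
    (hreg : ∀ a : A, a * ω = 0 → a = 0) : σ.symm ω = ω :=
  σ.symm_apply_eq.mpr <| (sub_eq_zero.mp <| hreg _ <| by rw [sub_mul, ← hσ ω, sub_self]).symm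

namespace MFactHom

attribute [local instance] RingHomInvPair.of_ringEquiv RingHomInvPair.of_ringEquiv_symm

variable {X Y Z W : MFact.{u, v} A ω σ}

def prodLift (f : MFactHom X Y) (g : MFactHom X Z) : MFactHom X (Y.prod Z) where
  f0 := f.f0.prod g.f0
  f1 := f.f1.prod g.f1
  comm0 x := Prod.ext (f.comm0 x) (g.comm0 x)
  comm1 x := Prod.ext (f.comm1 x) (g.comm1 x)

def prodDesc (f : MFactHom Y W) (g : MFactHom Z W) : MFactHom (Y.prod Z) W where
  f0 := f.f0.coprod g.f0
  f1 := f.f1.coprod g.f1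
  comm0 p := by
    change f.f1 (Y.d0 p.1) + g.f1 (Z.d0 p.2) = W.d0 (f.f0 p.1 + g.f0 p.2)
    rw [f.comm0, g.comm0, map_add]
  comm1 p := by
    change f.f0 (Y.d1 p.1) + g.f0 (Z.d1 p.2) = W.d1 (f.f1 p.1 + g.f1 p.2)
    rw [f.comm1, g.comm1, map_add]

variable (hσ : ∀ a : A, ω * a = σ a * ω) (hreg : ∀ a : A, a * ω = 0 → a = 0)
  {P Q : Type v} [AddCommGroup P] [Module A P] [AddCommGroup Q] [Module A Q]

def toTheta0 (g : X.X1 →ₗ[A] P) : MFactHom X (theta0 ω σ hσ P) where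
  f0 := g ∘ₗ X.d0
  f1 := g
  comm0 _ := rfl
  comm1 x := (congrArg g (X.comp10 x)).trans (g.map_smul ω x)

def fromTheta0 (g : P →ₗ[A] Y.X0) : MFactHom (theta0 ω σ hσ P) Y where
  f0 := g
  f1 := Y.d0 ∘ₗ g
  comm0 _ := rfl
  comm1 p := (g.map_smul ω p).trans (Y.comp01 (g p)).symm

def toTheta1 (g : X.X0 →ₛₗ[(σ.symm : A →+* A)] Q) : MFactHom X (theta1 ω σ hσ hreg Q) where
  f0 := g.toTw
  f1 := g ∘ₛₗ X.d1
  comm0 x := by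
    change g (X.d1 (X.d0 x)) = ω • g x
    rw [X.comp01, g.map_smulₛₗ, RingHom.coe_coe,
      RingEquiv.symm_apply_eq_self_of_mul_eq_apply_mul hσ hreg]
  comm1 _ := rfl

def fromTheta1 (g : Q →ₗ[A] Y.X1) : MFactHom (theta1 ω σ hσ hreg Q) Y where
  f0 := Y.d1 ∘ₛₗ g ∘ₛₗ Tw.unₛₗ _ Q
  f1 := g
  comm0 q := (g.map_smul ω q.un).trans (Y.comp10 (g q.un)).symm
  comm1 _ := rfl

theorem f0_apply_eq_add (f : MFactHom (Y.prod Z) W) (p : Y.X0 × Z.X0) :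
    f.f0 p = f.f0 (p.1, 0) + f.f0 (0, p.2) :=
  (congrArg f.f0 (Prod.ext (add_zero p.1).symm (zero_add p.2).symm)).trans (map_add f.f0 _ _)

theorem f1_apply_eq_add (f : MFactHom (Y.prod Z) W) (p : Y.X1 × Z.X1) :
    f.f1 p = f.f1 (p.1, 0) + f.f1 (0, p.2) :=
  (congrArg f.f1 (Prod.ext (add_zero p.1).symm (zero_add p.2).symm)).trans (map_add f.f1 _ _)

theorem f1_theta0_prod_inl (f : MFactHom ((theta0 ω σ hσ P).prod Z) Y) (p : P) :
    f.f1 (p, 0) = Y.d0 (f.f0 (p, 0)) :=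
  calc f.f1 (p, 0) = f.f1 (((theta0 ω σ hσ P).prod Z).d0 (p, 0)) :=
        congrArg f.f1 (Prod.ext rfl (map_zero Z.d0).symm)
    _ = Y.d0 (f.f0 (p, 0)) := f.comm0 (p, 0)

theorem f0_prod_theta1_inr (f : MFactHom (Z.prod (theta1 ω σ hσ hreg Q)) Y)
    (q : Tw (σ.symm : A →+* A) Q) : f.f0 (0, q) = Y.d1 (f.f1 (0, q.un)) :=
  calc f.f0 (0, q) = f.f0 ((Z.prod (theta1 ω σ hσ hreg Q)).d1 (0, q.un)) :=
        congrArg f.f0 (Prod.ext (map_zero Z.d1).symm rfl)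
    _ = Y.d1 (f.f1 (0, q.un)) := f.comm1 (0, q.un)

theorem fst_f0_theta0_prod (f : MFactHom X ((theta0 ω σ hσ P).prod Z)) (x : X.X0) :
    (f.f0 x).1 = (f.f1 (X.d0 x)).1 := by
  rw [f.comm0]
  rfl

theorem snd_f1_prod_theta1 (f : MFactHom X (Z.prod (theta1 ω σ hσ hreg Q))) (x : X.X1) :
    (f.f1 x).2 = (f.f0 (X.d1 x)).2.un := by
  rw [f.comm1]
  rfl

theorem comp_f0_of_theta_prod (u : MFactHom X ((theta0 ω σ hσ P).prod (theta1 ω σ hσ hreg Q)))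
    (v : MFactHom ((theta0 ω σ hσ P).prod (theta1 ω σ hσ hreg Q)) Y) (x : X.X0) :
    (v.comp u).f0 x = v.f0 ((u.f1 (X.d0 x)).1, 0) + Y.d1 (v.f1 (0, (u.f0 x).2.un)) :=
  calc (v.comp u).f0 x = v.f0 ((u.f0 x).1, 0) + v.f0 (0, (u.f0 x).2) := f0_apply_eq_add v (u.f0 x)
    _ = _ := congrArg₂ (· + ·) (congrArg (fun p => v.f0 (p, 0)) (fst_f0_theta0_prod hσ u x))
        (f0_prod_theta1_inr hσ hreg v _)

theorem comp_f1_of_theta_prod (u : MFactHom X ((theta0 ω σ hσ P).prod (theta1 ω σ hσ hreg Q)))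
    (v : MFactHom ((theta0 ω σ hσ P).prod (theta1 ω σ hσ hreg Q)) Y) (x : X.X1) :
    (v.comp u).f1 x = Y.d0 (v.f0 ((u.f1 x).1, 0)) + v.f1 (0, (u.f0 (X.d1 x)).2.un) :=
  calc (v.comp u).f1 x = v.f1 ((u.f1 x).1, 0) + v.f1 (0, (u.f1 x).2) := f1_apply_eq_add v (u.f1 x)
    _ = _ := congrArg₂ (· + ·) (f1_theta0_prod_inl hσ v _)
        (congrArg (fun q => v.f1 (0, q)) (snd_f1_prod_theta1 hσ hreg u x))

end MFactHom

theorem pNullHomotopical_iff_factors_through_trivial_general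
    {A : Type u} [Ring A] (ω : A) (σ : A ≃+* A)
    (hσ : ∀ a : A, ω * a = σ a * ω)
    (hreg : ∀ a : A, a * ω = 0 → a = 0)
    (X Y : MFact.{u, v} A ω σ) (f : MFactHom X Y) :
    (∃ (h0 : X.X0 →ₛₗ[(σ.symm : A →+* A)] Y.X1) (h1 : X.X1 →ₗ[A] Y.X0),
      FactorsThroughProjectiveSL (σ.symm : A →+* A) h0 ∧
      FactorsThroughProjective h1 ∧
      (∀ x : X.X0, f.f0 x = h1 (X.d0 x) + Y.d1 (h0 x)) ∧
      (∀ x : X.X1, f.f1 x = Y.d0 (h1 x) + h0 (X.d1 x))) ↔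
    (∃ P Q : ModuleCat.{v} A, Module.Projective A P ∧ Module.Projective A Q ∧
      ∃ (u : MFactHom X ((theta0 ω σ hσ P).prod (theta1 ω σ hσ hreg Q)))
        (v : MFactHom ((theta0 ω σ hσ P).prod (theta1 ω σ hσ hreg Q)) Y),
        (∀ x : X.X0, f.f0 x = (v.comp u).f0 x) ∧
        (∀ x : X.X1, f.f1 x = (v.comp u).f1 x)) := by
  constructor
  · rintro ⟨h0, h1, ⟨Q, hQ, u0, v0, hu0⟩, ⟨P, hP, u1, v1, hu1⟩, hf0, hf1⟩
    refine ⟨P, Q, hP, hQ, (MFactHom.toTheta0 hσ u1).prodLift (MFactHom.toTheta1 hσ hreg u0),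
      (MFactHom.fromTheta0 hσ v1).prodDesc (MFactHom.fromTheta1 hσ hreg v0),
      fun x => ?_, fun x => ?_⟩
    · rw [hf0, hu1, hu0]
      rfl
    · rw [hf1, hu1, hu0]
      rfl
  · rintro ⟨P, Q, hP, hQ, u, v, hf0, hf1⟩
    let u0 := Tw.unₛₗ _ Q ∘ₛₗ (LinearMap.snd A _ _ ∘ₗ u.f0)
    let v0 := v.f1 ∘ₗ LinearMap.inr A P Q
    let u1 := LinearMap.fst A _ _ ∘ₗ u.f1
    let v1 := v.f0 ∘ₗ LinearMap.inl A P _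
    refine ⟨v0 ∘ₛₗ u0, v1 ∘ₗ u1, ⟨Q, hQ, u0, v0, fun _ => rfl⟩, ⟨P, hP, u1, v1, fun _ => rfl⟩,
      fun x => ?_, fun x => ?_⟩
    · rw [hf0, MFactHom.comp_f0_of_theta_prod]
      rfl
    · rw [hf1, MFactHom.comp_f1_of_theta_prod]
      rfl

theorem pNullHomotopical_iff_factors_through_trivial
    {A : Type u} [Ring A] (ω : A) (σ : A ≃+* A)
    (hσ : ∀ a : A, ω * a = σ a * ω)
    (hreg : ∀ a : A, a * ω = 0 → a = 0) (hreg' : ∀ a : A, ω * a = 0 → a = 0)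
    (X Y : MFact.{u, v} A ω σ) (f : MFactHom X Y) :
    (∃ (h0 : X.X0 →ₛₗ[(σ.symm : A →+* A)] Y.X1) (h1 : X.X1 →ₗ[A] Y.X0),
      FactorsThroughProjectiveSL (σ.symm : A →+* A) h0 ∧
      FactorsThroughProjective h1 ∧
      (∀ x : X.X0, f.f0 x = h1 (X.d0 x) + Y.d1 (h0 x)) ∧
      (∀ x : X.X1, f.f1 x = Y.d0 (h1 x) + h0 (X.d1 x))) ↔
    (∃ P Q : ModuleCat.{v} A, Module.Projective A P ∧ Module.Projective A Q ∧
      ∃ (u : MFactHom X ((theta0 ω σ hσ P).prod (theta1 ω σ hσ hreg Q)))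
        (v : MFactHom ((theta0 ω σ hσ P).prod (theta1 ω σ hσ hreg Q)) Y),
        (∀ x : X.X0, f.f0 x = (v.comp u).f0 x) ∧
        (∀ x : X.X1, f.f1 x = (v.comp u).f1 x)) :=
  pNullHomotopical_iff_factors_through_trivial_general ω σ hσ hreg X Y f
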